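/- Let (M,g,N,K) be an almost Robinson manifold and suppose every Robinson 3-form ρ is recurrent along K, i.e. ∇_k ρ = f ρ for any section k of K and some function f. Then the congruence of null curves tangent to K is geodesic. -/
import Mathlib


/-- The Robinson 3-form `ρ = 3 κ_{[a} ω_{bc]}` associated with the optical
1-form `κ = g(k,·)` and the screen hermitian 2-form `ω`. -/
def Rob3 {F : Type*} [CommRing F] {X : Type*} [AddCommGroup X] [Module F X]
    (g ω : X →ₗ[F] X →ₗ[F] F) (k : X) (u v w : X) : F :=
  g k u * ω v w - g k v * ω u w + g k w * ω u v

/-- Let `(M,g,N,K)` be an almost Robinson manifold and suppose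
every Robinson 3-form `ρ` is recurrent along `K`, i.e. `∇_k ρ = f ρ` for any
section `k` of `K` and some function `f`.  Then the congruence of null curves
tangent to `K` is geodesic.

We use the algebraic model of Lorentzian geometry: `F` the ring of smooth
functions, `X` the module of vector fields with action `D` on functions, `g`
the metric, `nabla` the Levi-Civita connection; `k` generates the optical
distribution `K`, `ℓ` is a dual null vector field, and the Robinson 3-form is
`ρ = 3 κ_{[a} ω_{bc]}` where `ω = g(J·,·)` induces the Hermitian structure of
the screen bundle via `J` (`J² = −Id` on the screen bundle). -/
theorem robinson_recurrent_implies_geodesic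
    (F : Type*) [CommRing F] [Algebra ℝ F]
    (X : Type*) [AddCommGroup X] [Module F X]
    (D : X → F → F) (nabla : X → X → X)
    (g : X →ₗ[F] X →ₗ[F] F)
    (hDadd : ∀ u a b, D u (a + b) = D u a + D u b)
    (hgsymm : ∀ v w, g v w = g w v)
    (hgnd : ∀ u, (∀ w, g u w = 0) → u = 0)
    (hnabla_smul₁ : ∀ (a : F) (u w : X), nabla (a • u) w = a • nabla u w)
    (hnabla_leibniz : ∀ (u : X) (a : F) (v : X),
      nabla u (a • v) = a • nabla u v + D u a • v)
    (hmetric : ∀ u v w, D u (g v w) = g (nabla u v) w + g v (nabla u w))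
    -- the optical structure together with an adapted splitting
    (k l : X) (hkk : g k k = 0) (hll : g l l = 0) (hkl : g k l = 1)
    -- the screen-bundle Hermitian structure
    (ω : X →ₗ[F] X →ₗ[F] F) (J : X →ₗ[F] X)
    (hωalt : ∀ u v, ω u v = - ω v u)
    (hωk : ∀ v, ω k v = 0) (hωl : ∀ v, ω l v = 0)
    (hωJ : ∀ u v, ω u v = g (J u) v)
    (hJk : J k = 0) (hJl : J l = 0)
    (hJsq : ∀ u, J (J u) = -u + g l u • k + g k u • l)
    -- recurrence of the Robinson 3-form along K
    (f : F)
    (hrec : ∀ u v w, D k (Rob3 g ω k u v w) =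
      f * Rob3 g ω k u v w + Rob3 g ω k (nabla k u) v w
        + Rob3 g ω k u (nabla k v) w + Rob3 g ω k u v (nabla k w)) :
    ∀ u ∈ Submodule.span F {k}, nabla u u ∈ Submodule.span F {k} := by
  set m := nabla k k with hm
  have hD0 : D k (0 : F) = 0 := by
    have h := hDadd k 0 0
    simpa using h.symm
  have hgkm : g k m = 0 := by
    have h := hmetric k k k
    rw [hkk, hD0] at h
    rw [hgsymm m k] at h
    have h2 : g k m + g k m = 0 := h.symm
    have := congrArg (fun y => (1/2 : ℝ) • y) h2
    simpa [← two_smul ℝ, smul_smul] using this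
  have hR0 : ∀ v w, Rob3 g ω k k v w = 0 := by
    intro v w; simp [Rob3, hkk, hωk]
  have hkey : ∀ v w, Rob3 g ω k m v w = 0 := by
    intro v w
    have h3 := hrec k v w
    rw [hR0 v w, hD0, hR0 (nabla k v) w, hR0 v (nabla k w)] at h3
    simpa [← hm] using h3.symm
  have hωm : ∀ w, ω m w = 0 := by
    intro w
    have h := hkey l w
    simp only [Rob3] at h
    rw [hgkm, hkl] at h
    have hml : ω m l = 0 := by rw [hωalt m l, hωl]; ring
    rw [hml] at h
    linear_combination -h
  have hJm : J m = 0 := by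
    apply hgnd
    intro w
    rw [← hωJ]
    exact hωm w
  have hmval : m = g l m • k := by
    have h := hJsq m
    rw [hJm, map_zero, hgkm, zero_smul, add_zero] at h
    simpa using congrArg (fun y => m + y) h
  have hmmem : m ∈ Submodule.span F {k} := by
    rw [hmval]
    exact Submodule.smul_mem _ _ (Submodule.mem_span_singleton_self k)
  intro u hu
  rw [Submodule.mem_span_singleton] at hu
  obtain ⟨a, rfl⟩ := hu
  rw [hnabla_smul₁, hnabla_leibniz]
  exact Submodule.smul_mem _ _ (Submodule.add_mem _ (Submodule.smul_mem _ _ hmmem)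
    (Submodule.smul_mem _ _ (Submodule.mem_span_singleton_self k)))
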